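/- Let g be a unitary automorphism of a hermitian space (V, h) over (E, σ) with characteristic polynomial Π_{i=1}^ℓ P_i^{a_i}, the P_i distinct monic irreducible, and set V_i = ker P_i^{a_i}(g) (the generalized eigenspace decomposition V = ⊕_i V_i). If P_j ≠ P_i*, then V_i and V_j are orthogonal: h(V_i, V_j) = 0. -/

import Mathlib

/-!
Because `g` preserves `h`, moving a polynomial `Q(g)` across `h` conjugates its coefficients by
`σ`, and after multiplying the right-hand argument by `g ^ deg Q` it reverses `Q`:
`h(Q^σ(g) x, g^d z) = h(x, (rev Q)(g) z)`. Hence `ker P_i^{a_i}(g)` is orthogonal to the image of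
`(rev P_i^σ)^{a_i}(g)`, and `rev P_i^σ` is `P_i*` up to a nonzero scalar (or `1` when `P_i = X`).
As `P_i*` is again monic irreducible, `P_j ≠ P_i*` makes `P_j^{a_j}` coprime to `(rev P_i^σ)^{a_i}`,
so that image contains `ker P_j^{a_j}(g)`.
-/

/-- `P*`: for monic `P` with nonzero constant term `b_d`, `P*(T) = σ(b_d)⁻¹ T^d P^σ(T⁻¹)`. -/
noncomputable def pstar {k : Type*} [Field k] (σ : k →+* k) (P : Polynomial k) : Polynomial k :=
  Polynomial.C (σ (P.coeff 0))⁻¹ * (P.map σ).reverse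

open Polynomial

namespace Polynomial

variable {R : Type*} [Semiring R]

theorem reverse_X : (X : R[X]).reverse = 1 := by
  rw [← one_mul X, reverse_mul_X, ← C_1, reverse_C]

theorem reverse_eq_mirror {p : R[X]} (h0 : p.coeff 0 ≠ 0) : p.reverse = p.mirror := by
  rw [mirror, natTrailingDegree_eq_zero.mpr (Or.inr h0), pow_zero, mul_one]

section Domain

variable [NoZeroDivisors R]

theorem reverse_pow (p : R[X]) (n : ℕ) : (p ^ n).reverse = p.reverse ^ n := by
  induction n with
  | zero => rw [pow_zero, pow_zero, ← C_1, reverse_C]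
  | succ n ih => rw [pow_succ, reverse_mul_of_domain, ih, pow_succ]

noncomputable def mirrorMulEquiv : R[X] ≃* R[X] where
  toFun := mirror
  invFun := mirror
  left_inv := mirror_involutive
  right_inv := mirror_involutive
  map_mul' p q := mirror_mul_of_domain p q

theorem irreducible_mirror_iff {p : R[X]} : Irreducible p.mirror ↔ Irreducible p :=
  MulEquiv.irreducible_iff (x := p) mirrorMulEquiv

end Domain

theorem mem_range_aeval_of_isCoprime {R M : Type*} [CommRing R] [AddCommGroup M] [Module R M]
    (f : Module.End R M) {p q : R[X]} (hpq : IsCoprime p q) {y : M} (hy : aeval f p y = 0) :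
    y ∈ LinearMap.range (aeval f q) := by
  obtain ⟨u, v, huv⟩ := hpq
  refine ⟨aeval f v y, ?_⟩
  have := congr_arg (fun r => aeval f r y) huv
  simp only [map_add, map_mul, Module.End.mul_apply, LinearMap.add_apply, hy, map_zero,
    zero_add, map_one, Module.End.one_apply] at this
  rw [← Module.End.mul_apply, ← map_mul, mul_comm, map_mul, Module.End.mul_apply, this]

end Polynomial

section Pstar

variable {K : Type*} [Field K] {σ : K →+* K}

theorem reverse_map_eq_C_mul_pstar {P : K[X]} (h0 : P.coeff 0 ≠ 0) :
    (P.map σ).reverse = C (σ (P.coeff 0)) * pstar σ P := by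
  rw [pstar, ← mul_assoc, ← C_mul, mul_inv_cancel₀ (by simpa using h0), C_1, one_mul]

theorem pstar_monic {P : K[X]} (h0 : P.coeff 0 ≠ 0) : (pstar σ P).Monic := by
  have hσ0 : σ (P.coeff 0) ≠ 0 := by simpa using h0
  have ht : (P.map σ).natTrailingDegree = 0 :=
    natTrailingDegree_eq_zero.mpr (Or.inr (by rwa [coeff_map]))
  rw [Monic, pstar, leadingCoeff_mul, leadingCoeff_C, reverse_leadingCoeff, trailingCoeff, ht,
    coeff_map, inv_mul_cancel₀ hσ0]

theorem irreducible_pstar (hσ : ∀ x, σ (σ x) = x) {P : K[X]} (hP : Irreducible P)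
    (h0 : P.coeff 0 ≠ 0) : Irreducible (pstar σ P) := by
  have hσ' : σ.comp σ = RingHom.id K := RingHom.ext hσ
  have h0' : (P.map σ).coeff 0 ≠ 0 := by simpa using h0
  rw [pstar, irreducible_isUnit_mul (isUnit_C.mpr (by simpa using h0)), reverse_eq_mirror h0',
    irreducible_mirror_iff]
  exact (MulEquiv.irreducible_iff (mapEquiv (RingEquiv.ofRingHom σ σ hσ' hσ'))).mpr hP

theorem isCoprime_reverse_map_of_ne_pstar (hσ : ∀ x, σ (σ x) = x) {P Q : K[X]}
    (hP : P.Monic) (hPirr : Irreducible P) (hQ : Q.Monic) (hQirr : Irreducible Q)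
    (hne : Q ≠ pstar σ P) : IsCoprime Q (P.map σ).reverse := by
  by_cases h0 : P.coeff 0 = 0
  · have hPX : X = P := eq_of_monic_of_associated monic_X hP
      (irreducible_X.associated_of_dvd hPirr (X_dvd_iff.mpr h0))
    rw [← hPX, Polynomial.map_X, reverse_X]
    exact isCoprime_one_right
  · rw [reverse_map_eq_C_mul_pstar h0,
      isCoprime_mul_unit_left_right (isUnit_C.mpr (by simpa using h0)), hQirr.coprime_iff_not_dvd]
    intro hdvd
    exact hne (eq_of_monic_of_associated hQ (pstar_monic h0)
      (hQirr.associated_of_dvd (irreducible_pstar hσ hPirr h0) hdvd))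

end Pstar

namespace LinearMap

variable {R M : Type*} [CommRing R] [AddCommGroup M] [Module R M] {σ : R →+* R}
  (h : M →ₗ[R] M →ₛₗ[σ] R) {f : Module.End R M}

theorem apply_pow_apply_pow (hf : ∀ x y, h (f x) (f y) = h x y) (n : ℕ) (x y : M) :
    h ((f ^ n) x) ((f ^ n) y) = h x y := by
  induction n with
  | zero => rfl
  | succ n ih => rw [pow_succ', Module.End.mul_apply, Module.End.mul_apply, hf, ih]

theorem apply_aeval_map_apply_pow (hf : ∀ x y, h (f x) (f y) = h x y) {N : ℕ} {Q : R[X]}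
    (hQ : Q.natDegree ≤ N) (x z : M) :
    h (aeval f (Q.map σ) x) ((f ^ N) z) = h x (aeval f (reflect N Q) z) := by
  refine induction_with_natDegree_le
    (fun Q => h (aeval f (Q.map σ) x) ((f ^ N) z) = h x (aeval f (reflect N Q) z)) N ?_ ?_ ?_ Q hQ
  · simp
  · intro n r _ hn
    obtain ⟨k, rfl⟩ := Nat.exists_eq_add_of_le hn
    simp only [Polynomial.map_mul, map_C, Polynomial.map_pow, map_X, reflect_C_mul_X_pow,
      revAt_le hn, Nat.add_sub_cancel_left, map_mul, aeval_C, aeval_X_pow, Module.End.mul_apply,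
      Module.algebraMap_end_apply, map_smul, LinearMap.smul_apply, map_smulₛₗ, pow_add,
      apply_pow_apply_pow h hf, smul_eq_mul]
  · intro p q _ _ hp hq
    simp [hp, hq]

theorem apply_eq_zero_of_isCoprime_reverse (hf : ∀ x y, h (f x) (f y) = h x y) {Q S : R[X]}
    (hQS : IsCoprime S Q.reverse) {x y : M} (hx : aeval f (Q.map σ) x = 0)
    (hy : aeval f S y = 0) : h x y = 0 := by
  obtain ⟨z, rfl⟩ := mem_range_aeval_of_isCoprime f hQS hy
  rw [reverse, ← apply_aeval_map_apply_pow h hf le_rfl, hx, map_zero, zero_apply]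

end LinearMap

theorem stmt9 {E : Type*} [Field E] (σ : E →+* E) (hσ : ∀ x, σ (σ x) = x)
    {V : Type*} [AddCommGroup V] [Module E V]
    (h : V →ₗ[E] V →ₛₗ[σ] E)
    (g : V ≃ₗ[E] V) (hg : ∀ x y : V, h (g x) (g y) = h x y)
    (ℓ : ℕ) (P : Fin ℓ → Polynomial E) (a : Fin ℓ → ℕ)
    (hPmonic : ∀ i, (P i).Monic) (hPirr : ∀ i, Irreducible (P i))
    (i j : Fin ℓ) (hij : P j ≠ pstar σ (P i)) :
    ∀ x ∈ LinearMap.ker (Polynomial.aeval g.toLinearMap (P i ^ a i)),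
      ∀ y ∈ LinearMap.ker (Polynomial.aeval g.toLinearMap (P j ^ a j)),
        h x y = 0 := by
  intro x hx y hy
  have hσσ : ((P i ^ a i).map σ).map σ = P i ^ a i := by
    rw [map_map, show σ.comp σ = RingHom.id E from RingHom.ext hσ, map_id]
  have hcop : IsCoprime (P j ^ a j) ((P i ^ a i).map σ).reverse := by
    rw [Polynomial.map_pow, reverse_pow]
    exact (isCoprime_reverse_map_of_ne_pstar hσ (hPmonic i) (hPirr i) (hPmonic j) (hPirr j)
      hij).pow
  exact LinearMap.apply_eq_zero_of_isCoprime_reverse h (f := g.toLinearMap) hg hcop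
    (by rwa [hσσ]) hy
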